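/- For a Hausdorff space X: if every point of (CL(X), τ_locfin) is a G_δ-set, then X is perfect (every closed set is a G_δ) and every nonempty closed subset of X has a σ-locally finite external π-base. -/

import Mathlib

open Set TopologicalSpace

/-- The hyperspace of nonempty closed subsets of `X`. -/
structure CL (X : Type*) [TopologicalSpace X] where
  carrier : Set X
  nonempty' : carrier.Nonempty
  isClosed' : IsClosed carrier

/-- A quasi-metric: like a metric but without symmetry. -/
def IsQuasiMetric {X : Type*} (d : X → X → ℝ) : Prop :=
  (∀ x y, 0 ≤ d x y) ∧ (∀ x y, d x y = 0 ↔ x = y) ∧ (∀ x y z, d x z ≤ d x y + d y z)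

/-- A space is quasi-metrizable if the balls of some quasi-metric generate its topology. -/
def QuasiMetrizable (X : Type*) [TopologicalSpace X] : Prop :=
  ∃ d : X → X → ℝ, IsQuasiMetric d ∧
    ∀ s : Set X, IsOpen s ↔ ∀ x ∈ s, ∃ ε > 0, {y | d x y < ε} ⊆ s

/-- The set of non-isolated points of `X`. -/
def NI (X : Type*) [TopologicalSpace X] : Set X := {x | ¬ IsOpen ({x} : Set X)}

/-- A subset is countably compact if every countable open cover has a finite subcover. -/
def CountablyCompactSet {Y : Type*} [TopologicalSpace Y] (s : Set Y) : Prop :=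
  ∀ f : ℕ → Set Y, (∀ n, IsOpen (f n)) → s ⊆ ⋃ n, f n → ∃ t : Finset ℕ, s ⊆ ⋃ n ∈ t, f n

/-- A space is hemicompact if some sequence of compact sets is cofinal in the compact sets. -/
def Hemicompact (X : Type*) [TopologicalSpace X] : Prop :=
  ∃ K : ℕ → Set X, (∀ n, IsCompact (K n)) ∧ ∀ L : Set X, IsCompact L → ∃ n, L ⊆ K n

/-- The locally finite topology on `CL X`: subbase `V⁺` for `V` open and `𝒰⁻` for `𝒰` a
locally finite family of open sets. -/
def locFinTop (X : Type*) [TopologicalSpace X] : TopologicalSpace (CL X) :=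
  generateFrom
    ({S | ∃ U : Set X, IsOpen U ∧ S = {A : CL X | A.carrier ⊆ U}} ∪
     {S | ∃ 𝒰 : Set (Set X), (∀ U ∈ 𝒰, IsOpen U) ∧
        LocallyFinite (fun U : 𝒰 => (U : Set X)) ∧
        S = {A : CL X | ∀ U ∈ 𝒰, (A.carrier ∩ U).Nonempty}})

noncomputable instance (X : Type*) [TopologicalSpace X] : TopologicalSpace (CL X) :=
  locFinTop X

/-- `B` is an external π-base (of open sets) for `A`. -/
def ExternalPiBase {X : Type*} [TopologicalSpace X] (B : Set (Set X)) (A : Set X) : Prop :=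
  (∀ b ∈ B, IsOpen b) ∧
  ∀ U : Set X, IsOpen U → (U ∩ A).Nonempty → ∃ b ∈ B, (b ∩ A).Nonempty ∧ b ∩ A ⊆ U

open Filter Topology

/-!
A countable family of basic neighbourhoods `(Vₙ)⁺ ∩ (𝒲ₙ)⁻` of a nonempty closed set `A` in the
locally finite topology pins `A` down. Enlarging `A` by a point `x ∈ ⋂ Vₙ` stays inside every
`(Vₙ)⁺ ∩ (𝒲ₙ)⁻`, so `A = ⋂ Vₙ`. Shrinking `A` to `A \ U` for an open `U` meeting `A` leaves `A`,
so `A \ U` misses some `W ∈ 𝒲ₙ`, i.e. `∅ ≠ W ∩ A ⊆ U`: the `𝒲ₙ` (with the `Vₙ` thrown in for the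
case `A ⊆ U`) form a σ-locally finite external π-base of `A`.
-/

section LocallyFiniteSets

variable {X : Type*} [TopologicalSpace X]

lemma locallyFinite_coe_union {s t : Set (Set X)} (hs : LocallyFinite ((↑) : s → Set X))
    (ht : LocallyFinite ((↑) : t → Set X)) : LocallyFinite ((↑) : ↥(s ∪ t) → Set X) := by
  have h := (hs.sumElim ht).on_range
  rwa [Set.Sum.elim_range, Subtype.range_coe, Subtype.range_coe] at h

lemma locallyFinite_coe_insert (a : Set X) {s : Set (Set X)}
    (hs : LocallyFinite ((↑) : s → Set X)) : LocallyFinite ((↑) : ↥(insert a s) → Set X) := by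
  rw [insert_eq]
  exact locallyFinite_coe_union (locallyFinite_of_finite _) hs

end LocallyFiniteSets

namespace CL

variable {X : Type*} [TopologicalSpace X]

/-- The basic open set `V⁺ ∩ 𝒲⁻` of the locally finite topology. -/
def basicNhd (V : Set X) (𝒲 : Set (Set X)) : Set (CL X) :=
  {B | B.carrier ⊆ V ∧ ∀ W ∈ 𝒲, (B.carrier ∩ W).Nonempty}

lemma basicNhd_inter_basicNhd (V V' : Set X) (𝒲 𝒲' : Set (Set X)) :
    basicNhd V 𝒲 ∩ basicNhd V' 𝒲' = basicNhd (V ∩ V') (𝒲 ∪ 𝒲') := by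
  ext B
  simp only [basicNhd, mem_inter_iff, mem_ofPred_eq, subset_inter_iff, mem_union, or_imp,
    forall_and]
  tauto

structure IsBasicNhdOf (A : CL X) (V : Set X) (𝒲 : Set (Set X)) : Prop where
  isOpen : IsOpen V
  subset : A.carrier ⊆ V
  isOpen_of_mem : ∀ W ∈ 𝒲, IsOpen W
  inter_nonempty : ∀ W ∈ 𝒲, (A.carrier ∩ W).Nonempty
  locallyFinite : LocallyFinite ((↑) : 𝒲 → Set X)

lemma IsBasicNhdOf.inter {A : CL X} {V V' : Set X} {𝒲 𝒲' : Set (Set X)}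
    (h : IsBasicNhdOf A V 𝒲) (h' : IsBasicNhdOf A V' 𝒲') :
    IsBasicNhdOf A (V ∩ V') (𝒲 ∪ 𝒲') where
  isOpen := h.isOpen.inter h'.isOpen
  subset := subset_inter h.subset h'.subset
  isOpen_of_mem W hW := hW.elim (h.isOpen_of_mem W) (h'.isOpen_of_mem W)
  inter_nonempty W hW := hW.elim (h.inter_nonempty W) (h'.inter_nonempty W)
  locallyFinite := locallyFinite_coe_union h.locallyFinite h'.locallyFinite

lemma IsBasicNhdOf.mem_basicNhd_of_subset {A D : CL X} {V : Set X} {𝒲 : Set (Set X)}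
    (h : IsBasicNhdOf A V 𝒲) (hAD : A.carrier ⊆ D.carrier) (hDV : D.carrier ⊆ V) :
    D ∈ basicNhd V 𝒲 :=
  ⟨hDV, fun W hW => (h.inter_nonempty W hW).mono (inter_subset_inter_left W hAD)⟩

lemma exists_basicNhd_subset {A : CL X} {s : Set (CL X)} (hs : s ∈ 𝓝 A) :
    ∃ V 𝒲, IsBasicNhdOf A V 𝒲 ∧ basicNhd V 𝒲 ⊆ s := by
  let F : Filter (CL X) :=
    { sets := {s | ∃ V 𝒲, IsBasicNhdOf A V 𝒲 ∧ basicNhd V 𝒲 ⊆ s}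
      univ_sets := ⟨univ, ∅, ⟨isOpen_univ, subset_univ _, by simp, by simp,
        locallyFinite_of_finite _⟩, subset_univ _⟩
      sets_of_superset := fun ⟨V, 𝒲, h, hs⟩ hst => ⟨V, 𝒲, h, hs.trans hst⟩
      inter_sets := fun ⟨V, 𝒲, h, hs⟩ ⟨V', 𝒲', h', ht⟩ =>
        ⟨V ∩ V', 𝒲 ∪ 𝒲', h.inter h',
          basicNhd_inter_basicNhd V V' 𝒲 𝒲' ▸ inter_subset_inter hs ht⟩ }
  suffices F ≤ 𝓝 A from this hs
  rw [show 𝓝 A = _ from nhds_generateFrom]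
  refine le_iInf₂ fun s ⟨hAs, hsub⟩ => le_principal_iff.2 ?_
  rcases hsub with ⟨U, hU, rfl⟩ | ⟨𝒰, h𝒰, hlf, rfl⟩
  · exact ⟨U, ∅, ⟨hU, hAs, by simp, by simp, locallyFinite_of_finite _⟩, fun B hB => hB.1⟩
  · exact ⟨univ, 𝒰, ⟨isOpen_univ, subset_univ _, h𝒰, hAs, hlf⟩, fun B hB => hB.2⟩

lemma exists_seq_basicNhd_of_isGδ_singleton {A : CL X} (h : IsGδ ({A} : Set (CL X))) :
    ∃ (V : ℕ → Set X) (𝒲 : ℕ → Set (Set X)),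
      (∀ n, IsBasicNhdOf A (V n) (𝒲 n)) ∧ ⋂ n, basicNhd (V n) (𝒲 n) ⊆ {A} := by
  obtain ⟨g, hg, hAg⟩ := h.eq_iInter_nat
  have hmem (n : ℕ) : g n ∈ 𝓝 A := (hg n).mem_nhds (mem_iInter.1 (hAg ▸ mem_singleton A) n)
  choose V 𝒲 hV𝒲 hsub using fun n => exists_basicNhd_subset (hmem n)
  exact ⟨V, 𝒲, hV𝒲, hAg ▸ iInter_mono hsub⟩

lemma isGδ_carrier_of_isGδ_singleton [T1Space X] {A : CL X} (h : IsGδ ({A} : Set (CL X))) :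
    IsGδ A.carrier := by
  obtain ⟨V, 𝒲, hV𝒲, hA⟩ := exists_seq_basicNhd_of_isGδ_singleton h
  suffices A.carrier = ⋂ n, V n from this ▸ .iInter_of_isOpen fun n => (hV𝒲 n).isOpen
  refine (subset_iInter fun n => (hV𝒲 n).subset).antisymm fun x hx => ?_
  let D : CL X := ⟨A.carrier ∪ {x}, ⟨x, Or.inr rfl⟩, A.isClosed'.union isClosed_singleton⟩
  have hDA : D = A := hA <| mem_iInter.2 fun n => (hV𝒲 n).mem_basicNhd_of_subset
    subset_union_left (union_subset (hV𝒲 n).subset (singleton_subset_iff.2 (mem_iInter.1 hx n)))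
  exact congrArg carrier hDA ▸ Or.inr rfl

lemma exists_externalPiBase_of_isGδ_singleton {A : CL X} (h : IsGδ ({A} : Set (CL X))) :
    ∃ B : ℕ → Set (Set X), (∀ n, LocallyFinite (fun b : B n => (b : Set X))) ∧
      ExternalPiBase (⋃ n, B n) A.carrier := by
  obtain ⟨V, 𝒲, hV𝒲, hA⟩ := exists_seq_basicNhd_of_isGδ_singleton h
  refine ⟨fun n => insert (V n) (𝒲 n),
    fun n => locallyFinite_coe_insert _ (hV𝒲 n).locallyFinite, ?_, ?_⟩
  · simp only [mem_iUnion, mem_insert_iff]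
    rintro b ⟨n, rfl | hb⟩
    exacts [(hV𝒲 n).isOpen, (hV𝒲 n).isOpen_of_mem b hb]
  intro U hU ⟨x, hxU, hxA⟩
  by_contra! hnot
  by_cases hAU : A.carrier ⊆ U
  · exact hnot (V 0) (mem_iUnion.2 ⟨0, mem_insert _ _⟩)
      (A.nonempty'.mono fun y hy => ⟨(hV𝒲 0).subset hy, hy⟩) fun y hy => hAU hy.2
  obtain ⟨y, hyA, hyU⟩ := not_subset.1 hAU
  let D : CL X := ⟨A.carrier ∩ Uᶜ, ⟨y, hyA, hyU⟩, A.isClosed'.inter hU.isClosed_compl⟩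
  -- no `W ∈ 𝒲ₙ` has `W ∩ A ⊆ U`, so each meets `A \ U`
  have hD (n : ℕ) : D ∈ basicNhd (V n) (𝒲 n) := by
    refine ⟨inter_subset_left.trans (hV𝒲 n).subset, fun W hW => ?_⟩
    have hWA := (hV𝒲 n).inter_nonempty W hW
    obtain ⟨z, hzWA, hzU⟩ := not_subset.1 <| hnot W (mem_iUnion.2 ⟨n, mem_insert_of_mem _ hW⟩)
      (by rwa [inter_comm])
    exact ⟨z, ⟨hzWA.2, hzU⟩, hzWA.1⟩
  have hDA : D = A := hA (mem_iInter.2 hD)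
  exact (congrArg carrier hDA ▸ hxA : x ∈ D.carrier).2 hxU

end CL

theorem of_pointGdelta_CL_locFin {X : Type*} [TopologicalSpace X] [T2Space X]
    (h : ∀ A : CL X, IsGδ ({A} : Set (CL X))) :
    (∀ C : Set X, IsClosed C → IsGδ C) ∧
      ∀ A : Set X, IsClosed A → A.Nonempty →
        ∃ B : ℕ → Set (Set X),
          (∀ n, LocallyFinite (fun b : B n => (b : Set X))) ∧
          ExternalPiBase (⋃ n, B n) A := by
  refine ⟨fun C hC => ?_, fun A hA hne =>
    CL.exists_externalPiBase_of_isGδ_singleton (h ⟨A, hne, hA⟩)⟩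
  rcases C.eq_empty_or_nonempty with rfl | hne
  · exact .empty
  · exact CL.isGδ_carrier_of_isGδ_singleton (h ⟨C, hne, hC⟩)
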